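/- arXiv:2003.13478 — 4 statements merged into one kernel-verified Lean document; each statement's English description precedes it below -/
import Mathlib

section
/- Let A be a nonnegative self-adjoint bounded linear operator on a complex Hilbert space H, let α > 0 and γ ∈ (0,1], and let ψ ∈ H. Then α I + A is invertible and ‖(I − (α I + A)⁻¹ A) A^γ ψ‖ ≤ α^γ ‖ψ‖. -/
/-!
By the continuous functional calculus, `(1 - (α + A)⁻¹ A) A ^ γ = φ(A)` with
`φ(x) = α x ^ γ / (α + x)`, so its norm is at most the supremum of `φ` on the spectrum
`⊆ [0, ∞)`. Weighted AM–GM gives `α ^ (1 - γ) x ^ γ ≤ (1 - γ) α + γ x ≤ α + x`,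
i.e. `φ(x) ≤ α ^ γ`.
-/

theorem Real.mul_rpow_le_rpow_mul_add {α x γ : ℝ} (hα : 0 ≤ α) (hx : 0 ≤ x) (hγ₀ : 0 ≤ γ)
    (hγ₁ : γ ≤ 1) : α * x ^ γ ≤ α ^ γ * (α + x) := by
  have hmean : α ^ (1 - γ) * x ^ γ ≤ (1 - γ) * α + γ * x :=
    Real.geom_mean_le_arith_mean2_weighted (by linarith) hγ₀ hα hx (by ring)
  calc α * x ^ γ = α ^ γ * (α ^ (1 - γ) * x ^ γ) := by
        rw [← mul_assoc, ← Real.rpow_add' hα (by norm_num), add_sub_cancel, Real.rpow_one]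
    _ ≤ α ^ γ * (α + x) := by
        gcongr
        nlinarith

section CStarAlgebra

variable {A : Type*} [CStarAlgebra A]

lemma cfc_const_add_id (α : ℝ) (a : A) (ha : IsSelfAdjoint a := by cfc_tac) :
    cfc (fun x : ℝ => α + x) a = algebraMap ℝ A α + a := by
  rw [cfc_const_add α (fun x => x) a, cfc_id' ℝ a]

variable [PartialOrder A] [StarOrderedRing A] {a : A} {α : ℝ}

lemma const_add_pos_of_mem_spectrum (ha : 0 ≤ a) (hα : 0 < α) {x : ℝ} (hx : x ∈ spectrum ℝ a) :
    0 < α + x :=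
  add_pos_of_pos_of_nonneg hα (spectrum_nonneg_of_nonneg ha hx)

lemma isUnit_algebraMap_add (ha : 0 ≤ a) (hα : 0 < α) : IsUnit (algebraMap ℝ A α + a) := by
  rw [← cfc_const_add_id α a]
  exact (isUnit_cfc_iff _ a).mpr fun _ hx => (const_add_pos_of_mem_spectrum ha hα hx).ne'

lemma ringInverse_algebraMap_add (ha : 0 ≤ a) (hα : 0 < α) :
    Ring.inverse (algebraMap ℝ A α + a) = cfc (fun x : ℝ => (α + x)⁻¹) a := by
  rw [← cfc_const_add_id α a,
    cfc_inv _ _ fun _ hx => (const_add_pos_of_mem_spectrum ha hα hx).ne']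

lemma one_sub_ringInverse_algebraMap_add_mul (ha : 0 ≤ a) (hα : 0 < α) :
    1 - Ring.inverse (algebraMap ℝ A α + a) * a = cfc (fun x : ℝ => α / (α + x)) a := by
  have hne : ∀ x ∈ spectrum ℝ a, α + x ≠ 0 := fun _ hx =>
    (const_add_pos_of_mem_spectrum ha hα hx).ne'
  have hcont : ContinuousOn (fun x : ℝ => (α + x)⁻¹) (spectrum ℝ a) :=
    (continuousOn_const.add continuousOn_id).inv₀ hne
  have hsplit : cfc (fun x : ℝ => α / (α + x)) a = cfc (fun x : ℝ => 1 - (α + x)⁻¹ * x) a :=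
    cfc_congr fun x hx => by field_simp [hne x hx]; ring
  rw [hsplit,
    cfc_sub (fun _ => 1) (fun x => (α + x)⁻¹ * x) a continuousOn_const (hcont.mul continuousOn_id),
    cfc_const_one ℝ a, cfc_mul _ (fun x => x) a hcont continuousOn_id, cfc_id' ℝ a,
    ringInverse_algebraMap_add ha hα]

lemma norm_one_sub_ringInverse_algebraMap_add_mul_rpow_le (ha : 0 ≤ a) (hα : 0 < α) {γ : ℝ}
    (hγ₀ : 0 ≤ γ) (hγ₁ : γ ≤ 1) :
    ‖(1 - Ring.inverse (algebraMap ℝ A α + a) * a) * cfc (fun x : ℝ => x ^ γ) a‖ ≤ α ^ γ := by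
  have hne : ∀ x ∈ spectrum ℝ a, α + x ≠ 0 := fun _ hx =>
    (const_add_pos_of_mem_spectrum ha hα hx).ne'
  have hcont : ContinuousOn (fun x : ℝ => α / (α + x)) (spectrum ℝ a) :=
    continuousOn_const.div (continuousOn_const.add continuousOn_id) hne
  rw [one_sub_ringInverse_algebraMap_add_mul ha hα, ← cfc_mul _ _ a hcont
    (Real.continuous_rpow_const hγ₀).continuousOn]
  refine norm_cfc_le (by positivity) fun x hx => ?_
  have hx₀ : 0 ≤ x := spectrum_nonneg_of_nonneg ha hx
  have hpos := const_add_pos_of_mem_spectrum ha hα hx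
  rw [Real.norm_of_nonneg (by positivity), div_mul_eq_mul_div, div_le_iff₀ hpos]
  exact Real.mul_rpow_le_rpow_mul_add hα.le hx₀ hγ₀ hγ₁

end CStarAlgebra

/-- Let `A` be a nonnegative self-adjoint bounded linear operator on a complex Hilbert space
`H`, let `α > 0` and `γ ∈ (0,1]`, and let `ψ ∈ H`. Then `α I + A` is invertible and
`‖(I − (α I + A)⁻¹ A) (A^γ ψ)‖ ≤ α^γ ‖ψ‖`, where `A^γ` is given by the continuous
functional calculus applied to `fun λ => λ ^ γ`. -/
theorem stmt_6 {H : Type*} [NormedAddCommGroup H] [InnerProductSpace ℂ H] [CompleteSpace H]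
    (A : H →L[ℂ] H) (hA : A.IsPositive) (α γ : ℝ) (hα : 0 < α) (hγ : γ ∈ Set.Ioc (0 : ℝ) 1)
    (ψ : H) :
    IsUnit ((α : ℂ) • (1 : H →L[ℂ] H) + A) ∧
      ‖((1 : H →L[ℂ] H) - Ring.inverse ((α : ℂ) • (1 : H →L[ℂ] H) + A) ∘L A)
          (cfc (fun x : ℝ => x ^ γ) A ψ)‖ ≤ α ^ γ * ‖ψ‖ := by
  have hA₀ : 0 ≤ A := (ContinuousLinearMap.nonneg_iff_isPositive A).mpr hA
  have hα_smul : (α : ℂ) • (1 : H →L[ℂ] H) = algebraMap ℝ (H →L[ℂ] H) α := by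
    rw [Algebra.algebraMap_eq_smul_one, Complex.coe_smul]
  rw [hα_smul]
  refine ⟨isUnit_algebraMap_add hA₀ hα, ?_⟩
  calc ‖((1 - Ring.inverse (algebraMap ℝ (H →L[ℂ] H) α + A) * A) *
        cfc (fun x : ℝ => x ^ γ) A) ψ‖
      ≤ ‖(1 - Ring.inverse (algebraMap ℝ (H →L[ℂ] H) α + A) * A) *
        cfc (fun x : ℝ => x ^ γ) A‖ * ‖ψ‖ := ContinuousLinearMap.le_opNorm _ ψ
    _ ≤ α ^ γ * ‖ψ‖ := by
        gcongr
        exact norm_one_sub_ringInverse_algebraMap_add_mul_rpow_le hA₀ hα hγ.1.le hγ.2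
end

section
/- Let H₁, H₂ be complex Hilbert spaces, K, K̂ : H₁ → H₂ bounded linear operators, α > 0, β ∈ H₁ and r̂ ∈ H₂, and set β̂ = (α I + K̂*K̂)⁻¹ K̂* r̂ (the inverses below exist since K̂*K̂ and K*K are nonnegative self-adjoint and α > 0). Then β̂ − β = (α I + K̂*K̂)⁻¹ K̂* (r̂ − K̂β) + α (α I + K̂*K̂)⁻¹ K̂* (K̂ − K)(α I + K*K)⁻¹ β + α (α I + K̂*K̂)⁻¹ (K̂* − K*) K (α I + K*K)⁻¹ β + [(α I + K*K)⁻¹ K*K β − β]. -/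
/-!
Write `B = (α I + K̂*K̂)⁻¹` and `C = (α I + K*K)⁻¹`; both exist because `K̂*K̂` and `K*K` are
positive, so `Re ⟪(α I + K*K) x, x⟫ ≥ α ‖x‖²`. From `B (α I + K̂*K̂) = I` one gets
`B K̂*K̂ = I - α B`, likewise `C K*K = I - α C`, and the resolvent identity
`C - B = B (K̂*K̂ - K*K) C` then yields `B K̂*K̂ - C K*K = α B (K̂*K̂ - K*K) C`.
Applied to `β`, with `K̂*K̂ - K*K = K̂* (K̂ - K) + (K̂* - K*) K`, this is the decomposition.
-/

open ContinuousLinearMap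

section Resolvent

variable {𝕜 R : Type*} [CommRing 𝕜] [Ring R] [Algebra 𝕜 R] {c : 𝕜} {P Q : R}

theorem Ring.inverse_smul_one_add_mul_self (h : IsUnit (c • 1 + P)) :
    Ring.inverse (c • 1 + P) * P = 1 - c • Ring.inverse (c • 1 + P) := by
  have h_inv := Ring.inverse_mul_cancel _ h
  rw [mul_add, mul_smul_one] at h_inv
  rw [eq_sub_iff_add_eq, add_comm, h_inv]

theorem Ring.inverse_smul_one_add_mul_self_sub (hP : IsUnit (c • 1 + P))
    (hQ : IsUnit (c • 1 + Q)) :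
    Ring.inverse (c • 1 + P) * P - Ring.inverse (c • 1 + Q) * Q =
      c • (Ring.inverse (c • 1 + P) * (P - Q) * Ring.inverse (c • 1 + Q)) := by
  have resolvent : Ring.inverse (c • 1 + P) * (P - Q) * Ring.inverse (c • 1 + Q) =
      Ring.inverse (c • 1 + Q) - Ring.inverse (c • 1 + P) := by
    rw [← neg_sub Q P, mul_neg, neg_mul, ← add_sub_add_left_eq_sub _ _ (c • 1),
      ← Ring.inverse_sub_inverse (iff_of_true hP hQ), neg_sub]
  rw [resolvent, inverse_smul_one_add_mul_self hP, inverse_smul_one_add_mul_self hQ, smul_sub]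
  abel

end Resolvent

namespace ContinuousLinearMap

variable {𝕜 E : Type*} [RCLike 𝕜] [NormedAddCommGroup E] [InnerProductSpace 𝕜 E] [CompleteSpace E]

open RCLike in
theorem IsPositive.isUnit_smul_one_add {T : E →L[𝕜] E} (hT : T.IsPositive) {α : ℝ} (hα : 0 < α) :
    IsUnit ((α : 𝕜) • 1 + T) := by
  refine isUnit_of_forall_le_norm_inner_map _ (c := ⟨α, hα.le⟩) hα fun x ↦ ?_
  calc ‖x‖ ^ 2 * α = re (inner 𝕜 (((α : 𝕜) • (1 : E →L[𝕜] E)) x) x) := by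
        rw [smul_apply, one_apply_eq_self, inner_smul_left, conj_ofReal, re_ofReal_mul,
          inner_self_eq_norm_sq, mul_comm]
    _ ≤ re (inner 𝕜 (((α : 𝕜) • 1 + T) x) x) := by
        simpa only [add_apply, inner_add_left, map_add, le_add_iff_nonneg_right]
          using hT.re_inner_nonneg_left x
    _ ≤ ‖inner 𝕜 (((α : 𝕜) • 1 + T) x) x‖ := re_le_norm _

end ContinuousLinearMap

/-- Exact error decomposition `β̂ − β = R₁ + R₂ + R₃ + R₄` for the Tikhonov-regularized
estimator `β̂ = (α I + K̂*K̂)⁻¹ K̂* r̂`, where the inverses exist since `K̂*K̂` and `K*K` are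
nonnegative self-adjoint and `α > 0`. -/
theorem stmt_12 {H₁ H₂ : Type*} [NormedAddCommGroup H₁] [InnerProductSpace ℂ H₁]
    [CompleteSpace H₁] [NormedAddCommGroup H₂] [InnerProductSpace ℂ H₂] [CompleteSpace H₂]
    (K Khat : H₁ →L[ℂ] H₂) (α : ℝ) (hα : 0 < α) (β : H₁) (rhat : H₂) (βhat : H₁)
    (hβhat : βhat =
      Ring.inverse ((α : ℂ) • (1 : H₁ →L[ℂ] H₁) + adjoint Khat ∘L Khat) (adjoint Khat rhat)) :
    βhat - β =
      Ring.inverse ((α : ℂ) • (1 : H₁ →L[ℂ] H₁) + adjoint Khat ∘L Khat)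
          (adjoint Khat (rhat - Khat β)) +
        (α : ℂ) • (Ring.inverse ((α : ℂ) • (1 : H₁ →L[ℂ] H₁) + adjoint Khat ∘L Khat)
          (adjoint Khat ((Khat - K)
            (Ring.inverse ((α : ℂ) • (1 : H₁ →L[ℂ] H₁) + adjoint K ∘L K) β)))) +
        (α : ℂ) • (Ring.inverse ((α : ℂ) • (1 : H₁ →L[ℂ] H₁) + adjoint Khat ∘L Khat)
          ((adjoint Khat - adjoint K)
            (K (Ring.inverse ((α : ℂ) • (1 : H₁ →L[ℂ] H₁) + adjoint K ∘L K) β)))) +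
        (Ring.inverse ((α : ℂ) • (1 : H₁ →L[ℂ] H₁) + adjoint K ∘L K)
            ((adjoint K ∘L K) β) - β) := by
  have key := DFunLike.congr_fun (Ring.inverse_smul_one_add_mul_self_sub
    ((isPositive_adjoint_comp_self Khat).isUnit_smul_one_add hα)
    ((isPositive_adjoint_comp_self K).isUnit_smul_one_add hα)) β
  simp only [mul_apply_eq_comp, smul_apply, sub_apply, comp_apply, map_sub] at key
  subst hβhat
  simp only [comp_apply, map_sub, sub_apply]
  linear_combination (norm := module) key
end

section
/- Let H₁, H₂ be complex Hilbert spaces, K̂, K̂_m : H₁ → H₂ bounded linear operators, α > 0, and r̂ ∈ H₂. Suppose α I + K̂_m K̂* is invertible with ‖(α I + K̂_m K̂*)⁻¹‖_op ≤ 1/α. Define β̂ = K̂*(α I + K̂ K̂*)⁻¹ r̂ and β̂_m = K̂*(α I + K̂_m K̂*)⁻¹ r̂. Then ‖β̂_m − β̂‖ ≤ (1/(2 α^{3/2})) · ‖(K̂ − K̂_m) K̂*‖_op · ‖r̂‖. -/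
/-!
Write `A = αI + K̂K̂*` and `A_m = αI + K̂_mK̂*`. Since `K̂K̂*` is positive, `A` is invertible, and
for `y = A x` the identity `re ⟪y, x⟫ = α‖x‖² + ‖K̂*x‖²` gives
`‖K̂*x‖² ≤ ‖x‖ (‖y‖ - α‖x‖) ≤ ‖y‖² / (4α)`, i.e. `‖K̂* A⁻¹‖ ≤ 1 / (2√α)`. The resolvent identity
`A⁻¹ - A_m⁻¹ = A⁻¹ (A_m - A) A_m⁻¹` with `A_m - A = -(K̂ - K̂_m)K̂*` and `‖A_m⁻¹‖ ≤ 1/α` then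
yields the bound.
-/

open ContinuousLinearMap
open scoped InnerProductSpace

namespace ContinuousLinearMap

variable {𝕜 E F : Type*} [RCLike 𝕜] [NormedAddCommGroup E] [InnerProductSpace 𝕜 E]
  [CompleteSpace E] [NormedAddCommGroup F] [InnerProductSpace 𝕜 F] [CompleteSpace F]

theorem re_inner_smul_one_add_self_comp_adjoint_apply (T : E →L[𝕜] F) (α : ℝ) (x : F) :
    RCLike.re ⟪((α : 𝕜) • 1 + T ∘L adjoint T) x, x⟫_𝕜 = α * ‖x‖ ^ 2 + ‖adjoint T x‖ ^ 2 := by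
  simp only [add_apply, smul_apply, coe_comp, Function.comp_apply, inner_add_left,
    inner_smul_left, ← adjoint_inner_right T, inner_self_eq_norm_sq_to_K, map_add]
  simp

theorem isUnit_smul_one_add_self_comp_adjoint (T : E →L[𝕜] F) {α : ℝ} (hα : 0 < α) :
    IsUnit ((α : 𝕜) • 1 + T ∘L adjoint T) := by
  refine isUnit_of_forall_le_norm_inner_map _ (c := ⟨α, hα.le⟩) hα fun x => ?_
  calc ‖x‖ ^ 2 * α ≤ RCLike.re ⟪((α : 𝕜) • 1 + T ∘L adjoint T) x, x⟫_𝕜 := by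
        rw [re_inner_smul_one_add_self_comp_adjoint_apply, mul_comm]
        exact le_add_of_nonneg_right (sq_nonneg _)
    _ ≤ _ := RCLike.re_le_norm _

theorem two_mul_sqrt_mul_norm_adjoint_apply_le (T : E →L[𝕜] F) {α : ℝ} (hα : 0 < α) (x : F) :
    2 * √α * ‖adjoint T x‖ ≤ ‖((α : 𝕜) • 1 + T ∘L adjoint T) x‖ := by
  set y := ((α : 𝕜) • 1 + T ∘L adjoint T) x
  have hre : α * ‖x‖ ^ 2 + ‖adjoint T x‖ ^ 2 ≤ ‖y‖ * ‖x‖ :=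
    (re_inner_smul_one_add_self_comp_adjoint_apply T α x).symm.le.trans
      ((RCLike.re_le_norm _).trans (norm_inner_le_norm _ _))
  have hsq : (2 * √α * ‖adjoint T x‖) ^ 2 ≤ ‖y‖ ^ 2 := by
    rw [mul_pow, mul_pow, Real.sq_sqrt hα.le]
    nlinarith [sq_nonneg (‖y‖ - 2 * α * ‖x‖)]
  exact (pow_le_pow_iff_left₀ (by positivity) (norm_nonneg y) two_ne_zero).mp hsq

theorem norm_adjoint_ring_inverse_smul_one_add_self_comp_adjoint_apply_le (T : E →L[𝕜] F)
    {α : ℝ} (hα : 0 < α) (y : F) :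
    ‖adjoint T (Ring.inverse ((α : 𝕜) • 1 + T ∘L adjoint T) y)‖ ≤ ‖y‖ / (2 * √α) := by
  set A := (α : 𝕜) • 1 + T ∘L adjoint T
  have hy : A (Ring.inverse A y) = y := by
    rw [← mul_apply_eq_comp, Ring.mul_inverse_cancel _ (isUnit_smul_one_add_self_comp_adjoint T hα),
      one_apply_eq_self]
  rw [le_div_iff₀ (by positivity), mul_comm, ← congrArg norm hy]
  exact two_mul_sqrt_mul_norm_adjoint_apply_le T hα (Ring.inverse A y)

end ContinuousLinearMap

/-- Deterministic discretization estimate: with `β̂ = K̂*(α I + K̂K̂*)⁻¹ r̂` and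
`β̂_m = K̂*(α I + K̂_m K̂*)⁻¹ r̂`, if `α I + K̂_m K̂*` is invertible with inverse of norm at
most `1/α`, then `‖β̂_m − β̂‖ ≤ (1/(2 α^(3/2))) ‖(K̂ − K̂_m) K̂*‖ ‖r̂‖`. -/
theorem stmt_14 {H₁ H₂ : Type*} [NormedAddCommGroup H₁] [InnerProductSpace ℂ H₁]
    [CompleteSpace H₁] [NormedAddCommGroup H₂] [InnerProductSpace ℂ H₂] [CompleteSpace H₂]
    (Khat Khatm : H₁ →L[ℂ] H₂) (α : ℝ) (hα : 0 < α) (rhat : H₂)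
    (hUnit : IsUnit ((α : ℂ) • (1 : H₂ →L[ℂ] H₂) + Khatm ∘L adjoint Khat))
    (hInvNorm : ‖Ring.inverse ((α : ℂ) • (1 : H₂ →L[ℂ] H₂) + Khatm ∘L adjoint Khat)‖ ≤ 1 / α)
    (βhat βhatm : H₁)
    (hβhat : βhat = adjoint Khat
      (Ring.inverse ((α : ℂ) • (1 : H₂ →L[ℂ] H₂) + Khat ∘L adjoint Khat) rhat))
    (hβhatm : βhatm = adjoint Khat
      (Ring.inverse ((α : ℂ) • (1 : H₂ →L[ℂ] H₂) + Khatm ∘L adjoint Khat) rhat)) :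
    ‖βhatm - βhat‖ ≤ 1 / (2 * α ^ ((3 : ℝ) / 2)) * ‖(Khat - Khatm) ∘L adjoint Khat‖ * ‖rhat‖ := by
  set A := (α : ℂ) • (1 : H₂ →L[ℂ] H₂) + Khat ∘L adjoint Khat
  set Am := (α : ℂ) • (1 : H₂ →L[ℂ] H₂) + Khatm ∘L adjoint Khat
  set D := (Khat - Khatm) ∘L adjoint Khat
  have hAm_sub_A : Am - A = -D := by simp only [Am, A, D, sub_comp]; abel
  have hβ : βhat - βhatm = adjoint Khat (Ring.inverse A ((Am - A) (Ring.inverse Am rhat))) := by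
    rw [hβhat, hβhatm, ← map_sub, ← sub_apply, Ring.inverse_sub_inverse (a := A) (b := Am)
      (iff_of_true (isUnit_smul_one_add_self_comp_adjoint Khat hα) hUnit),
      mul_apply_eq_comp, mul_apply_eq_comp]
  have hAm_inv : ‖Ring.inverse Am rhat‖ ≤ ‖rhat‖ / α := by
    rw [div_eq_inv_mul, ← one_div]
    exact (le_opNorm _ _).trans (mul_le_mul_of_nonneg_right hInvNorm (norm_nonneg _))
  have hrpow : α ^ ((3 : ℝ) / 2) = α * √α := by
    rw [show (3 : ℝ) / 2 = 1 + 1 / 2 by norm_num, Real.rpow_add hα, Real.rpow_one,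
      ← Real.sqrt_eq_rpow]
  calc ‖βhatm - βhat‖ = ‖βhat - βhatm‖ := norm_sub_rev _ _
    _ ≤ ‖D‖ * (‖rhat‖ / α) / (2 * √α) := by
        rw [hβ, hAm_sub_A, neg_apply, map_neg, map_neg, norm_neg]
        refine (norm_adjoint_ring_inverse_smul_one_add_self_comp_adjoint_apply_le
          Khat hα _).trans ?_
        gcongr
        exact (le_opNorm _ _).trans (by gcongr)
    _ = _ := by rw [hrpow]; field_simp
end

section
/- Let (U, ν) be a σ-finite measure space, T ≥ 1 an integer, z₁,…,z_T : [0,1] → ℝ continuous functions, and ψ₁,…,ψ_T ∈ L²(ν). Define the kernel k̂(s,u) = (1/T) Σ_{t=1}^T z_t(s) ψ_t(u), let 0 = s₀ ≤ s₁ ≤ ⋯ ≤ s_m = 1 with δ_j = s_j − s_{j−1}, and let D : L²(ν) → L²(ν) be the bounded linear operator (D g)(u) = ∫₀¹ k̂(s,u) (∫_U g(v) k̂(s,v) dν(v)) ds − Σ_{j=1}^m k̂(s_j,u) (∫_U g(v) k̂(s_j,v) dν(v)) δ_j. Then ‖D‖_op ≤ (max_{1≤t≤T} ‖ψ_t‖_{L²(ν)})²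 · max_{1≤t,k≤T} |Σ_{j=1}^m z_t(s_j) z_k(s_j) δ_j − ∫₀¹ z_t(s) z_k(s) ds|. -/
/-!
With `a_k = ∫ g ψ_k dν`, the integrand `s ↦ k̂(s,u) ∫ g k̂(s,·) dν` equals
`T⁻² ∑_{t,k} a_k ψ_t(u) z_t(s) z_k(s)`, so "integral minus Riemann sum" acts only on the products
`z_t z_k`: `D g = T⁻² ∑_{t,k} a_k E_{tk} ψ_t` with `E_{tk}` the Riemann-sum error of `z_t z_k`.
Cauchy–Schwarz gives `|a_k| ≤ ‖g‖ max_t ‖ψ_t‖`, and the `T²` terms cancel the factor `T⁻²`.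
-/

open MeasureTheory

/-- The kernel `k̂(s,u) = (1/T) ∑_t z_t(s) ψ_t(u)` of the sample integral operator. -/
noncomputable def sampleKernel {U : Type*} (T : ℕ) (z : Fin T → ℝ → ℝ)
    (ψ : Fin T → (U → ℝ)) : ℝ → U → ℝ :=
  fun x u => (T : ℝ)⁻¹ * ∑ t, z t x * ψ t u

open Finset

theorem MeasureTheory.Lp.coeFn_finset_sum_smul {α E 𝕜 : Type*} [MeasurableSpace α] {μ : Measure α}
    [NormedField 𝕜] [NormedAddCommGroup E] [NormedSpace 𝕜 E] {p : ENNReal} {ι : Type*}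
    (I : Finset ι) (c : ι → 𝕜) (f : ι → Lp E p μ) :
    ⇑(∑ i ∈ I, c i • f i) =ᵐ[μ] fun x => ∑ i ∈ I, c i • f i x := by
  classical
  induction I using Finset.induction_on with
  | empty =>
    filter_upwards [Lp.coeFn_zero E p μ] with x hx
    simpa using hx
  | insert i I hi ih =>
    filter_upwards [Lp.coeFn_add (c i • f i) (∑ j ∈ I, c j • f j), Lp.coeFn_smul (c i) (f i), ih]
      with x hadd hsmul hsum
    simp only [sum_insert hi, hadd, Pi.add_apply, hsmul, Pi.smul_apply, hsum]

theorem MeasureTheory.L2.integral_mul_eq_inner {α : Type*} [MeasurableSpace α] {μ : Measure α}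
    (f g : Lp ℝ 2 μ) : ∫ x, f x * g x ∂μ = inner ℝ f g := by
  simp [L2.inner_def, mul_comm]

theorem MeasureTheory.L2.integrable_mul {α : Type*} [MeasurableSpace α] {μ : Measure α}
    (f g : Lp ℝ 2 μ) : Integrable (fun x => f x * g x) μ := by
  simpa [mul_comm] using L2.integrable_inner (𝕜 := ℝ) f g

section RiemannSum

variable {m : ℕ}

def riemannSum (s : Fin (m + 1) → ℝ) (f : ℝ → ℝ) : ℝ :=
  ∑ j : Fin m, f (s j.succ) * (s j.succ - s j.castSucc)

theorem riemannSum_sum_mul {ι : Type*} (I : Finset ι) (s : Fin (m + 1) → ℝ) (w : ι → ℝ)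
    (f : ι → ℝ → ℝ) :
    riemannSum s (fun x => ∑ i ∈ I, w i * f i x) = ∑ i ∈ I, w i * riemannSum s (f i) := by
  simp only [riemannSum, sum_mul, mul_sum]
  rw [sum_comm]
  exact sum_congr rfl fun _ _ => sum_congr rfl fun _ _ => by ring

theorem integral_sub_riemannSum_sum_mul {ι : Type*} (I : Finset ι) (s : Fin (m + 1) → ℝ)
    {a b : ℝ} (w : ι → ℝ) {f : ι → ℝ → ℝ}
    (hf : ∀ i ∈ I, IntervalIntegrable (f i) volume a b) :
    ((∫ x in a..b, ∑ i ∈ I, w i * f i x) - riemannSum s fun x => ∑ i ∈ I, w i * f i x) =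
      ∑ i ∈ I, w i * ((∫ x in a..b, f i x) - riemannSum s (f i)) := by
  rw [intervalIntegral.integral_finsetSum fun i hi => (hf i hi).const_mul (w i),
    riemannSum_sum_mul, ← sum_sub_distrib]
  simp only [intervalIntegral.integral_const_mul, mul_sub]

end RiemannSum

theorem norm_sum_smul_le {ι E : Type*} [Fintype ι] [SeminormedAddCommGroup E] [NormedSpace ℝ E]
    {c : ι → ℝ} {v : ι → E} {A M : ℝ} (hc : ∀ i, |c i| ≤ A) (hv : ∀ i, ‖v i‖ ≤ M) :
    ‖∑ i, c i • v i‖ ≤ Fintype.card ι * (A * M) := by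
  calc ‖∑ i, c i • v i‖ ≤ ∑ i, ‖c i • v i‖ := norm_sum_le _ _
    _ ≤ ∑ _i : ι, A * M := sum_le_sum fun i _ => by
        rw [norm_smul, Real.norm_eq_abs]
        exact mul_le_mul (hc i) (hv i) (norm_nonneg _) ((abs_nonneg _).trans (hc i))
    _ = Fintype.card ι * (A * M) := by simp

theorem ContinuousLinearMap.opNorm_le_of_apply_eq_sum_inner_smul {E : Type*}
    [NormedAddCommGroup E] [InnerProductSpace ℝ E] {T : ℕ} (D : E →L[ℝ] E) (ψ : Fin T → E)
    (e : Fin T × Fin T → ℝ) {M C : ℝ} (hC : 0 ≤ C) (hψ : ∀ t, ‖ψ t‖ ≤ M)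
    (he : ∀ p, |e p| ≤ C)
    (hD : ∀ g, D g = ∑ p, ((T : ℝ)⁻¹ ^ 2 * inner ℝ g (ψ p.2) * e p) • ψ p.1) :
    ‖D‖ ≤ M ^ 2 * C := by
  refine ContinuousLinearMap.opNorm_le_bound _ (by positivity) fun g => ?_
  rcases T.eq_zero_or_pos with rfl | hT
  · simp [hD]; positivity
  have hM : 0 ≤ M := (norm_nonneg _).trans (hψ ⟨0, hT⟩)
  have hc : ∀ p : Fin T × Fin T,
      |(T : ℝ)⁻¹ ^ 2 * inner ℝ g (ψ p.2) * e p| ≤ (T : ℝ)⁻¹ ^ 2 * (‖g‖ * M) * C := fun p => by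
    have hinner : |inner ℝ g (ψ p.2)| ≤ ‖g‖ * M :=
      (abs_real_inner_le_norm g _).trans (by gcongr; exact hψ p.2)
    simp only [abs_mul, abs_pow, abs_inv, Nat.abs_cast]
    gcongr
    exact he p
  calc ‖D g‖ ≤ Fintype.card (Fin T × Fin T) * ((T : ℝ)⁻¹ ^ 2 * (‖g‖ * M) * C * M) :=
        hD g ▸ norm_sum_smul_le hc fun p => hψ p.1
    _ = M ^ 2 * C * ‖g‖ := by
      have hT0 : (T : ℝ) ≠ 0 := by positivity
      simp only [Fintype.card_prod, Fintype.card_fin, Nat.cast_mul]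
      field_simp

section SampleKernel

variable {U : Type*} {T : ℕ} (z : Fin T → ℝ → ℝ)

theorem integral_mul_sampleKernel [MeasurableSpace U] {ν : Measure U} {g : U → ℝ}
    {ψ : Fin T → U → ℝ} (hψ : ∀ t, Integrable (fun v => g v * ψ t v) ν) (x : ℝ) :
    ∫ v, g v * sampleKernel T z ψ x v ∂ν = (T : ℝ)⁻¹ * ∑ t, z t x * ∫ v, g v * ψ t v ∂ν := by
  simp only [sampleKernel, mul_sum, mul_left_comm (g _)]
  rw [integral_finsetSum _ fun t _ => ((hψ t).const_mul _).const_mul _]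
  simp only [integral_const_mul]

theorem sampleKernel_mul_sum (ψ : Fin T → U → ℝ) (a : Fin T → ℝ) (x : ℝ) (u : U) :
    sampleKernel T z ψ x u * ((T : ℝ)⁻¹ * ∑ k, z k x * a k) =
      ∑ p : Fin T × Fin T, (T : ℝ)⁻¹ ^ 2 * ψ p.1 u * a p.2 * (z p.1 x * z p.2 x) := by
  rw [sampleKernel, mul_mul_mul_comm, sum_mul_sum, Fintype.sum_prod_type, mul_sum]
  simp only [mul_sum]
  exact sum_congr rfl fun _ _ => sum_congr rfl fun _ _ => by ring

theorem integral_sub_riemannSum_sampleKernel [MeasurableSpace U] {ν : Measure U} {m : ℕ}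
    (s : Fin (m + 1) → ℝ) {a b : ℝ}
    (hzz : ∀ t k, IntervalIntegrable (fun x => z t x * z k x) volume a b) {g : U → ℝ}
    {ψ : Fin T → U → ℝ} (hψ : ∀ t, Integrable (fun v => g v * ψ t v) ν) (u : U) :
    (∫ x in a..b, sampleKernel T z ψ x u * ∫ v, g v * sampleKernel T z ψ x v ∂ν) -
        riemannSum s (fun x => sampleKernel T z ψ x u * ∫ v, g v * sampleKernel T z ψ x v ∂ν) =
      ∑ p : Fin T × Fin T, (T : ℝ)⁻¹ ^ 2 * ψ p.1 u * (∫ v, g v * ψ p.2 v ∂ν) *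
        ((∫ x in a..b, z p.1 x * z p.2 x) - riemannSum s fun x => z p.1 x * z p.2 x) := by
  simp only [integral_mul_sampleKernel z hψ, sampleKernel_mul_sum]
  exact integral_sub_riemannSum_sum_mul _ _ _ fun p _ => hzz p.1 p.2

end SampleKernel

theorem stmt_16_general {U : Type*} [MeasurableSpace U] (ν : Measure U)
    (T : ℕ) (hT : 0 < T) (z : Fin T → ℝ → ℝ)
    (hz : ∀ t, ContinuousOn (z t) (Set.Icc (0 : ℝ) 1))
    (ψ : Fin T → Lp ℝ 2 ν)
    (m : ℕ) (s : Fin (m + 1) → ℝ)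
    (D : Lp ℝ 2 ν →L[ℝ] Lp ℝ 2 ν)
    (hD : ∀ g : Lp ℝ 2 ν, (D g : U → ℝ) =ᵐ[ν] fun u =>
      (∫ x in (0 : ℝ)..1, sampleKernel T z (fun t => (ψ t : U → ℝ)) x u *
          ∫ v, g v * sampleKernel T z (fun t => (ψ t : U → ℝ)) x v ∂ν) -
        ∑ j : Fin m, sampleKernel T z (fun t => (ψ t : U → ℝ)) (s j.succ) u *
          (∫ v, g v * sampleKernel T z (fun t => (ψ t : U → ℝ)) (s j.succ) v ∂ν) *
          (s j.succ - s j.castSucc)) :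
    ‖D‖ ≤
      (Finset.sup' Finset.univ ⟨⟨0, hT⟩, Finset.mem_univ _⟩ fun t : Fin T => ‖ψ t‖) ^ 2 *
        Finset.sup' Finset.univ ⟨(⟨0, hT⟩, ⟨0, hT⟩), Finset.mem_univ _⟩
          (fun tk : Fin T × Fin T =>
            |(∑ j : Fin m, z tk.1 (s j.succ) * z tk.2 (s j.succ) * (s j.succ - s j.castSucc)) -
              ∫ x in (0 : ℝ)..1, z tk.1 x * z tk.2 x|) := by
  set M := univ.sup' _ fun t : Fin T => ‖ψ t‖
  set C := univ.sup' _ fun tk : Fin T × Fin T =>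
    |(∑ j : Fin m, z tk.1 (s j.succ) * z tk.2 (s j.succ) * (s j.succ - s j.castSucc)) -
      ∫ x in (0 : ℝ)..1, z tk.1 x * z tk.2 x|
  set E : Fin T × Fin T → ℝ := fun p =>
    (∫ x in (0 : ℝ)..1, z p.1 x * z p.2 x) - riemannSum s fun x => z p.1 x * z p.2 x
  have hψM : ∀ t, ‖ψ t‖ ≤ M := fun t => le_sup' (fun t => ‖ψ t‖) (mem_univ t)
  have hEC : ∀ p, |E p| ≤ C := fun p => by
    rw [abs_sub_comm]
    exact le_sup' (fun tk : Fin T × Fin T => |riemannSum s (fun x => z tk.1 x * z tk.2 x) -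
      ∫ x in (0 : ℝ)..1, z tk.1 x * z tk.2 x|) (mem_univ p)
  have hzz : ∀ t k, IntervalIntegrable (fun x => z t x * z k x) volume 0 1 := fun t k =>
    ((hz t).mul (hz k)).intervalIntegrable_of_Icc zero_le_one
  refine D.opNorm_le_of_apply_eq_sum_inner_smul ψ E ((abs_nonneg _).trans (hEC (⟨0, hT⟩, ⟨0, hT⟩)))
    hψM hEC fun g => Lp.ext ?_
  filter_upwards [hD g, Lp.coeFn_finset_sum_smul (𝕜 := ℝ) univ _ fun p : Fin T × Fin T => ψ p.1]
    with u hDu hsum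
  refine hDu.trans ((integral_sub_riemannSum_sampleKernel z s hzz
    (fun t => L2.integrable_mul g (ψ t)) u).trans ?_)
  rw [hsum]
  exact sum_congr rfl fun p _ => by rw [L2.integral_mul_eq_inner, smul_eq_mul]; ring

/-- Reduction of the operator-norm discretization error `‖(K̂ − K̂_m)K̂*‖` to the uniform
Riemann-sum approximation error of the products `z_t z_k`: for the operator `D = (K̂ − K̂_m)K̂*`
acting as `(D g)(u) = ∫₀¹ k̂(s,u)(∫ g(v) k̂(s,v) dν(v)) ds − ∑_j k̂(s_j,u)(∫ g(v) k̂(s_j,v) dν(v)) δ_j`,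
one has `‖D‖ ≤ (max_t ‖ψ_t‖)² · max_{t,k} |∑_j z_t(s_j) z_k(s_j) δ_j − ∫₀¹ z_t z_k|`. -/
theorem stmt_16 {U : Type*} [MeasurableSpace U] (ν : Measure U) [SigmaFinite ν]
    (T : ℕ) (hT : 0 < T) (z : Fin T → ℝ → ℝ)
    (hz : ∀ t, ContinuousOn (z t) (Set.Icc (0 : ℝ) 1))
    (ψ : Fin T → Lp ℝ 2 ν)
    (m : ℕ) (hm : 0 < m) (s : Fin (m + 1) → ℝ) (hs_mono : Monotone s)
    (hs0 : s 0 = 0) (hsm : s (Fin.last m) = 1)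
    (D : Lp ℝ 2 ν →L[ℝ] Lp ℝ 2 ν)
    (hD : ∀ g : Lp ℝ 2 ν, (D g : U → ℝ) =ᵐ[ν] fun u =>
      (∫ x in (0 : ℝ)..1, sampleKernel T z (fun t => (ψ t : U → ℝ)) x u *
          ∫ v, g v * sampleKernel T z (fun t => (ψ t : U → ℝ)) x v ∂ν) -
        ∑ j : Fin m, sampleKernel T z (fun t => (ψ t : U → ℝ)) (s j.succ) u *
          (∫ v, g v * sampleKernel T z (fun t => (ψ t : U → ℝ)) (s j.succ) v ∂ν) *
          (s j.succ - s j.castSucc)) :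
    ‖D‖ ≤
      (Finset.sup' Finset.univ ⟨⟨0, hT⟩, Finset.mem_univ _⟩ fun t : Fin T => ‖ψ t‖) ^ 2 *
        Finset.sup' Finset.univ ⟨(⟨0, hT⟩, ⟨0, hT⟩), Finset.mem_univ _⟩
          (fun tk : Fin T × Fin T =>
            |(∑ j : Fin m, z tk.1 (s j.succ) * z tk.2 (s j.succ) * (s j.succ - s j.castSucc)) -
              ∫ x in (0 : ℝ)..1, z tk.1 x * z tk.2 x|) :=
  stmt_16_general ν T hT z hz ψ m s D hD
end
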